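/- Let G be a group, V a finite-dimensional vector space over ℚ_ℓ with a linear G-action, and T a G-stable ℤ_ℓ-lattice in V. Then V^G ≠ 0 if and only if the G-fixed subgroup (V/T)^G is infinite. -/

import Mathlib

/-!
Give `V` the sup norm of the coordinates in a `ℚ_ℓ`-basis taken from `T`. Then `T` is bounded
(it is finitely generated over `ℤ_ℓ`) and open (it contains the unit ball), so a subset of `V` has
finite image in `V ⧸ T` exactly when it is bounded. A nonzero fixed vector `v` puts the whole line
`ℚ_ℓ v` into the preimage of `(V/T)^G`, which is then unbounded. Conversely, vectors of that
preimage are moved by every `g` by at most a bound for `T`; rescaled into a fixed compact shell,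
vectors of larger and larger norm become closer and closer to being fixed, and Cantor's
intersection theorem yields a nonzero fixed vector.
-/

open Bornology Set

namespace Representation

variable {𝕜 G E : Type*} [NontriviallyNormedField 𝕜] [Monoid G] [NormedAddCommGroup E]
  [NormedSpace 𝕜 E] (ρ : Representation 𝕜 G E)

theorem exists_almostFixed_mem_shell_of_not_isBounded {C : ℝ}
    (hC : ¬IsBounded {v | ∀ g, ‖ρ g v - v‖ ≤ C}) {k : 𝕜} (hk : 1 < ‖k‖) {ε : ℝ} (hε : 0 < ε) :
    ∃ u : E, ‖k‖⁻¹ ≤ ‖u‖ ∧ ‖u‖ ≤ 1 ∧ ∀ g, ‖ρ g u - u‖ ≤ ε := by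
  simp only [isBounded_iff_forall_norm_le, mem_ofPred_eq, not_exists, not_forall, not_le] at hC
  obtain ⟨v, hvC, hv⟩ := hC (C / ε)
  have hC0 : 0 ≤ C := (norm_nonneg _).trans (hvC 1)
  rw [div_lt_iff₀ hε] at hv
  have hv0 : v ≠ 0 := by
    rintro rfl
    simp only [norm_zero, zero_mul] at hv
    linarith
  obtain ⟨d, -, hdv, hkd, -⟩ := rescale_to_shell hk one_pos hv0
  rw [norm_smul] at hdv hkd
  refine ⟨d • v, by rwa [norm_smul, ← one_div], by rw [norm_smul]; exact hdv.le, fun g => ?_⟩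
  rw [map_smul, ← smul_sub, norm_smul]
  nlinarith [hvC g, norm_nonneg d]

theorem exists_fixed_of_not_isBounded [ProperSpace 𝕜] [FiniteDimensional 𝕜 E] {C : ℝ}
    (hC : ¬IsBounded {v | ∀ g, ‖ρ g v - v‖ ≤ C}) : ∃ v : E, v ≠ 0 ∧ ∀ g, ρ g v = v := by
  obtain ⟨k, hk⟩ := NormedField.exists_one_lt_norm 𝕜
  have := FiniteDimensional.proper 𝕜 E
  let K : Ioi (0 : ℝ) → Set E := fun ε =>
    {u | ‖k‖⁻¹ ≤ ‖u‖ ∧ ‖u‖ ≤ 1 ∧ ∀ g, ‖ρ g u - u‖ ≤ ε}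
  have hρ : ∀ g, Continuous (ρ g) := fun g => (ρ g).continuous_of_finiteDimensional
  have hK : ∀ ε, IsClosed (K ε) := fun ε => by
    simp only [K, ofPred_and, ofPred_forall]
    exact (isClosed_le (by fun_prop) (by fun_prop)).inter ((isClosed_le (by fun_prop)
      (by fun_prop)).inter (isClosed_iInter fun g => isClosed_le (by fun_prop) (by fun_prop)))
  obtain ⟨u, hu⟩ := IsCompact.nonempty_iInter_of_directed_nonempty_isCompact_isClosed K
    (Monotone.directed_ge fun ε ε' h u hu => ⟨hu.1, hu.2.1, fun g => (hu.2.2 g).trans h⟩)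
    (fun ε => exists_almostFixed_mem_shell_of_not_isBounded ρ hC hk ε.2)
    (fun ε => (isCompact_closedBall 0 1).of_isClosed_subset (hK ε)
      fun u hu => mem_closedBall_zero_iff.2 hu.2.1)
    hK
  rw [mem_iInter] at hu
  refine ⟨u, fun h => ?_, fun g => sub_eq_zero.1 (norm_le_zero_iff.1 ?_)⟩
  · have := (hu ⟨1, mem_Ioi.2 one_pos⟩).1
    rw [h, norm_zero] at this
    exact (inv_pos.2 (one_pos.trans hk)).not_ge this
  · exact le_of_forall_gt_imp_ge_of_dense fun ε hε => (hu ⟨ε, hε⟩).2.2 g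

end Representation

theorem QuotientAddGroup.finite_image_mk_iff_isBounded {E : Type*} [SeminormedAddCommGroup E]
    [ProperSpace E] {T : AddSubgroup E} (hTb : IsBounded (T : Set E)) (hTo : IsOpen (T : Set E))
    {S : Set E} : ((mk : E → E ⧸ T) '' S).Finite ↔ IsBounded S := by
  constructor
  · intro hfin
    obtain ⟨F, hFS, hF, hFS'⟩ := exists_subset_image_finite_and.1 ⟨_, subset_rfl, hfin, rfl⟩
    refine (isBounded_add hF.isBounded hTb).subset fun s hs => ?_
    obtain ⟨x, hx, hxs⟩ : mk s ∈ (mk : E → E ⧸ T) '' F := hFS' ▸ mem_image_of_mem _ hs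
    exact ⟨x, hx, -x + s, QuotientAddGroup.eq.1 hxs, add_neg_cancel_left x s⟩
  · intro hS
    have := QuotientAddGroup.discreteTopology hTo
    exact (hS.isCompact_closure.image continuous_mk).finite_of_discrete.subset
      (image_mono subset_closure)

theorem not_isBounded_of_forall_smul_mem {𝕜 E : Type*} [NontriviallyNormedField 𝕜]
    [NormedAddCommGroup E] [NormedSpace 𝕜 E] {S : Set E} {v : E} (hv : v ≠ 0)
    (hS : ∀ c : 𝕜, c • v ∈ S) : ¬IsBounded S := by
  rw [isBounded_iff_forall_norm_le]
  rintro ⟨R, hR⟩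
  obtain ⟨c, hc⟩ := NormedField.exists_lt_norm 𝕜 (R / ‖v‖)
  rw [div_lt_iff₀ (norm_pos_iff.2 hv)] at hc
  linarith [norm_smul c v ▸ hR _ (hS c)]

section PadicLattice

variable {ℓ : ℕ} [Fact ℓ.Prime]

theorem norm_padicInt_smul_le {E : Type*} [SeminormedAddCommGroup E] [NormedSpace ℚ_[ℓ] E]
    [Module ℤ_[ℓ] E] [IsScalarTower ℤ_[ℓ] ℚ_[ℓ] E] (z : ℤ_[ℓ]) (v : E) : ‖z • v‖ ≤ ‖v‖ := by
  rw [← algebraMap_smul ℚ_[ℓ] z v, norm_smul]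
  exact mul_le_of_le_one_left (norm_nonneg v) (PadicInt.norm_le_one z)

theorem Submodule.FG.isBounded {E : Type*} [SeminormedAddCommGroup E]
    [NormedSpace ℚ_[ℓ] E] [Module ℤ_[ℓ] E] [IsScalarTower ℤ_[ℓ] ℚ_[ℓ] E]
    {T : Submodule ℤ_[ℓ] E} (hT : T.FG) : IsBounded (T : Set E) := by
  obtain ⟨t, rfl⟩ := hT
  refine isBounded_iff_forall_norm_le.2 ⟨∑ x ∈ t, ‖x‖, fun v hv => ?_⟩
  obtain ⟨f, -, rfl⟩ := Submodule.mem_span_finset.1 hv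
  exact (norm_sum_le _ _).trans (Finset.sum_le_sum fun x _ => norm_padicInt_smul_le _ _)

theorem Module.Basis.mem_of_forall_norm_equivFun_le_one {V ι : Type*} [Fintype ι]
    [AddCommGroup V] [Module ℚ_[ℓ] V] [Module ℤ_[ℓ] V] [IsScalarTower ℤ_[ℓ] ℚ_[ℓ] V]
    (b : Basis ι ℚ_[ℓ] V) {T : Submodule ℤ_[ℓ] V} (hb : ∀ i, b i ∈ T) {v : V}
    (hv : ∀ i, ‖b.equivFun v i‖ ≤ 1) : v ∈ T := by
  rw [← b.sum_equivFun v]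
  refine T.sum_mem fun i _ => ?_
  obtain ⟨z, hz⟩ : ∃ z : ℤ_[ℓ], (z : ℚ_[ℓ]) = b.equivFun v i := ⟨⟨_, hv i⟩, rfl⟩
  rw [← hz, ← PadicInt.algebraMap_apply, algebraMap_smul]
  exact T.smul_mem z (hb i)

end PadicLattice

theorem stmt0_general {ℓ : ℕ} [Fact ℓ.Prime] {G : Type*} [Group G]
    {V : Type*} [AddCommGroup V] [Module ℚ_[ℓ] V] [FiniteDimensional ℚ_[ℓ] V]
    [Module ℤ_[ℓ] V] [IsScalarTower ℤ_[ℓ] ℚ_[ℓ] V]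
    (ρ : Representation ℚ_[ℓ] G V)
    (T : Submodule ℤ_[ℓ] V) (hTfg : T.FG)
    (hTspan : Submodule.span ℚ_[ℓ] (T : Set V) = ⊤) :
    (∃ v : V, v ≠ 0 ∧ ∀ g : G, ρ g v = v) ↔
      Set.Infinite
        (QuotientAddGroup.mk (s := T.toAddSubgroup) ''
          {v : V | ∀ g : G, ρ g v - v ∈ T}) := by
  obtain ⟨ι, b, hbT⟩ : ∃ (ι : Type _) (b : Module.Basis ι ℚ_[ℓ] V), ∀ i, b i ∈ T :=
    ⟨_, .ofSpan hTspan.ge, fun i => Module.Basis.ofSpan_subset hTspan.ge (mem_range_self i)⟩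
  have := FiniteDimensional.fintypeBasisIndex b
  let _ : NormedAddCommGroup V :=
    NormedAddCommGroup.induced V (ι → ℚ_[ℓ]) b.equivFun b.equivFun.injective
  let _ : NormedSpace ℚ_[ℓ] V := NormedSpace.induced ℚ_[ℓ] V (ι → ℚ_[ℓ]) b.equivFun
  have hTo : IsOpen (T : Set V) := by
    refine T.toAddSubgroup.isOpen_of_mem_nhds (g := 0) (Filter.mem_of_superset
      (Metric.closedBall_mem_nhds 0 one_pos) fun v hv => ?_)
    exact b.mem_of_forall_norm_equivFun_le_one hbT fun i =>
      (norm_le_pi_norm (b.equivFun v) i).trans (mem_closedBall_zero_iff.1 hv : ‖v‖ ≤ 1)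
  have := FiniteDimensional.proper ℚ_[ℓ] V
  have hTb := hTfg.isBounded
  obtain ⟨R, hR⟩ := isBounded_iff_forall_norm_le.1 hTb
  rw [Set.Infinite, QuotientAddGroup.finite_image_mk_iff_isBounded hTb hTo]
  constructor
  · rintro ⟨v, hv0, hv⟩
    exact not_isBounded_of_forall_smul_mem (𝕜 := ℚ_[ℓ]) hv0 fun c g => by
      simp [map_smul, hv g]
  · intro hS
    exact ρ.exists_fixed_of_not_isBounded (C := R) fun h => hS (h.subset fun v hv g => hR _ (hv g))

/-- Lemma 2.1: V^G ≠ 0 iff (V/T)^G is infinite, for a G-stable ℤ_ℓ-lattice T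
in a finite-dimensional ℚ_ℓ-vector space V with linear G-action. -/
theorem stmt0 {ℓ : ℕ} [Fact ℓ.Prime] {G : Type*} [Group G]
    {V : Type*} [AddCommGroup V] [Module ℚ_[ℓ] V] [FiniteDimensional ℚ_[ℓ] V]
    [Module ℤ_[ℓ] V] [IsScalarTower ℤ_[ℓ] ℚ_[ℓ] V]
    (ρ : Representation ℚ_[ℓ] G V)
    (T : Submodule ℤ_[ℓ] V) (hTfg : T.FG)
    (hTspan : Submodule.span ℚ_[ℓ] (T : Set V) = ⊤)
    (hTstab : ∀ g : G, ∀ x ∈ T, ρ g x ∈ T) :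
    (∃ v : V, v ≠ 0 ∧ ∀ g : G, ρ g v = v) ↔
      Set.Infinite
        (QuotientAddGroup.mk (s := T.toAddSubgroup) ''
          {v : V | ∀ g : G, ρ g v - v ∈ T}) :=
  stmt0_general ρ T hTfg hTspan
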